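/- arXiv:math/0401375 — 4 statements merged into one kernel-verified Lean document; each statement's English description precedes it below -/
import Mathlib

section
/- Let α, β, i be positive integers with α < β. Then α^{<i>} < β^{<i>}. -/
open scoped BigOperators

/-- The largest `m` with `C(m, i) ≤ α` (for `i ≥ 1`, `α ≥ 1` this is the leading
exponent of the `i`-binomial development of `α`). -/
noncomputable def lead (α i : ℕ) : ℕ := sSup {m : ℕ | Nat.choose m i ≤ α}

/-- `binUp i α = α^{<i>}`, defined through the `i`-binomial development of `α`:
if `α = C(m_i, i) + C(m_{i-1}, i-1) + ⋯ + C(m_j, j)` with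
`m_i > m_{i-1} > ⋯ > m_j ≥ j ≥ 1`, then
`binUp i α = C(m_i+1, i+1) + C(m_{i-1}+1, i) + ⋯ + C(m_j+1, j+1)`, and `binUp i 0 = 0`. -/
noncomputable def binUp : ℕ → ℕ → ℕ
  | 0, _ => 0
  | (i+1), α =>
    if α = 0 then 0
    else Nat.choose (lead α (i+1) + 1) (i+2) +
      binUp i (α - Nat.choose (lead α (i+1)) (i+1))

/-- `h : ℕ → ℕ` is a Macaulay function if `h 0 = 1` and `h (i+1) ≤ (h i)^{<i>}`
for every `i ≥ 1`. -/
def MacaulayFun (h : ℕ → ℕ) : Prop :=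
  h 0 = 1 ∧ ∀ i, 1 ≤ i → h (i+1) ≤ binUp i (h i)

/-- `s₀(h) = inf {n | h n < C(a+n-1, n)} ∈ ℕ ∪ {∞}` for a Macaulay function of
type `a = h 1`. -/
noncomputable def s0M (h : ℕ → ℕ) : ℕ∞ :=
  sInf {x : ℕ∞ | ∃ n : ℕ, x = (n : ℕ∞) ∧ h n < Nat.choose (h 1 + n - 1) n}

/-- `sup f = max {n | f n ≠ 0}` for a finitely supported `f : ℕ → ℕ`. -/
noncomputable def supN (f : ℕ → ℕ) : ℕ := sSup {n : ℕ | f n ≠ 0}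

/-- A character: a finitely supported `γ : ℤ → ℤ` with `∑ γ(n) = 0`. -/
def IsChar (γ : ℤ → ℤ) : Prop :=
  (Function.support γ).Finite ∧ ∑ᶠ n, γ n = 0

/-- `s₀(γ) = inf {n ≥ 0 | γ n ≠ -1}`. -/
noncomputable def s0C (γ : ℤ → ℤ) : ℤ := sInf {n : ℤ | 0 ≤ n ∧ γ n ≠ -1}

/-- A positive character: `γ(n) = 0` for `n < 0`, `γ(0) = -1` and `γ(n) ≥ 0`
for every `n ≥ s₀(γ)`. -/
def PosChar (γ : ℤ → ℤ) : Prop :=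
  IsChar γ ∧ (∀ n < 0, γ n = 0) ∧ γ 0 = -1 ∧ ∀ n : ℤ, s0C γ ≤ n → 0 ≤ γ n

/-- `sup γ = max {n | γ n ≠ 0}` for a finitely supported `γ : ℤ → ℤ`. -/
noncomputable def supZ (γ : ℤ → ℤ) : ℤ := sSup {n : ℤ | γ n ≠ 0}

/-- `IsDev α i j m` says that `α = C(m_i, i) + C(m_{i-1}, i-1) + ⋯ + C(m_j, j)`
with `m_i > m_{i-1} > ⋯ > m_j ≥ j ≥ 1` is the `i`-binomial development of `α`. -/
def IsDev (α i j : ℕ) (m : ℕ → ℕ) : Prop :=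
  1 ≤ j ∧ j ≤ i ∧ j ≤ m j ∧ (∀ k, j ≤ k → k < i → m k < m (k+1)) ∧
    α = ∑ k ∈ Finset.Icc j i, Nat.choose (m k) k

/-!
Write `α = C(m, k+1) + r` with `m = lead α (k+1)`, so that `r < C(m, k)` by Pascal's rule and
`α^{<k+1>} = C(m+1, k+2) + r^{<k>}`. An induction on `k` shows that `r < C(m, k)` forces
`r^{<k>} < C(m+1, k+1)`, so `α^{<k+1>} < C(m+2, k+2)`. Hence it suffices to compare `α` with
`α + 1`: either `α + 1 < C(m+1, k+1)`, and only the remainder grows, or `α + 1 = C(m+1, k+1)`,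
whose image is exactly `C(m+2, k+2)`.
-/

lemma choose_lt_choose_succ_left {m k : ℕ} (h : k ≤ m) :
    m.choose (k + 1) < (m + 1).choose (k + 1) := by
  rw [Nat.choose_succ_succ']
  have := Nat.choose_pos h
  omega

lemma lt_choose_add (m k : ℕ) : m < m.choose (k + 1) + (k + 1) := by
  induction m with
  | zero => omega
  | succ m ih =>
    rcases Nat.lt_or_ge m k with h | h
    · omega
    · have := choose_lt_choose_succ_left h
      omega

section Lead

variable {α k m : ℕ}

lemma bddAbove_setOf_choose_le (α k : ℕ) : BddAbove {m : ℕ | m.choose (k + 1) ≤ α} :=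
  ⟨α + (k + 1), fun m hm => (lt_choose_add m k).le.trans (Nat.add_le_add_right hm _)⟩

lemma choose_lead_le (α k : ℕ) : (lead α (k + 1)).choose (k + 1) ≤ α :=
  Nat.sSup_mem ⟨0, by simp⟩ (bddAbove_setOf_choose_le α k)

lemma lt_choose_lead_succ (α k : ℕ) : α < (lead α (k + 1) + 1).choose (k + 1) := by
  by_contra! h
  exact (lead α (k + 1)).lt_succ_self.not_ge (le_csSup (bddAbove_setOf_choose_le α k) h)

lemma lead_eq_of_choose_le_of_lt (h₁ : m.choose (k + 1) ≤ α) (h₂ : α < (m + 1).choose (k + 1)) :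
    lead α (k + 1) = m := by
  refine le_antisymm ?_ (le_csSup (bddAbove_setOf_choose_le α k) h₁)
  by_contra! h
  have : (m + 1).choose (k + 1) ≤ (lead α (k + 1)).choose (k + 1) := Nat.choose_le_choose _ h
  have := choose_lead_le α k
  omega

end Lead

section BinUp

variable {α k m : ℕ}

@[simp]
lemma binUp_zero_left (α : ℕ) : binUp 0 α = 0 := by
  simp [binUp]

@[simp]
lemma binUp_zero_right (i : ℕ) : binUp i 0 = 0 := by
  cases i <;> simp [binUp]

lemma binUp_succ_of_choose_le_of_lt (h₁ : m.choose (k + 1) ≤ α)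
    (h₂ : α < (m + 1).choose (k + 1)) :
    binUp (k + 1) α = (m + 1).choose (k + 2) + binUp k (α - m.choose (k + 1)) := by
  rcases Nat.eq_zero_or_pos α with rfl | hα
  · have hmk : m < k + 1 := Nat.choose_eq_zero_iff.mp (Nat.le_zero.mp h₁)
    simp [Nat.choose_eq_zero_of_lt (Nat.succ_lt_succ hmk)]
  · rw [binUp, if_neg hα.ne', lead_eq_of_choose_le_of_lt h₁ h₂]

lemma binUp_one (α : ℕ) : binUp 1 α = (α + 1).choose 2 := by
  rw [binUp_succ_of_choose_le_of_lt (m := α) (by simp) (by simp)]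
  simp

lemma binUp_choose_succ (n k : ℕ) : binUp (k + 1) (n.choose (k + 1)) = (n + 1).choose (k + 2) := by
  rcases Nat.lt_or_ge n k with h | h
  · rw [Nat.choose_eq_zero_of_lt (by omega), Nat.choose_eq_zero_of_lt (by omega),
      binUp_zero_right]
  · rw [binUp_succ_of_choose_le_of_lt le_rfl (choose_lt_choose_succ_left h)]
    simp

lemma binUp_lt_choose_succ_succ {i L α : ℕ} (h : α < L.choose i) :
    binUp i α < (L + 1).choose (i + 1) := by
  induction i generalizing L α with
  | zero => simp
  | succ k ih =>
    have h₁ := choose_lead_le α k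
    have h₂ := lt_choose_lead_succ α k
    set m := lead α (k + 1)
    have hmL : m + 1 ≤ L := by
      by_contra! hL
      have := Nat.choose_le_choose (k + 1) (Nat.le_of_lt_succ hL)
      omega
    have hrem : α - m.choose (k + 1) < m.choose k := by
      rw [Nat.choose_succ_succ'] at h₂
      omega
    calc binUp (k + 1) α
        = (m + 1).choose (k + 2) + binUp k (α - m.choose (k + 1)) :=
          binUp_succ_of_choose_le_of_lt h₁ h₂
      _ < (m + 1).choose (k + 2) + (m + 1).choose (k + 1) := Nat.add_lt_add_left (ih hrem) _
      _ = (m + 2).choose (k + 2) := by rw [Nat.choose_succ_succ' (m + 1) (k + 1), add_comm]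
      _ ≤ (L + 1).choose (k + 2) := Nat.choose_le_choose _ (by omega)

lemma binUp_lt_binUp_succ (k α : ℕ) : binUp (k + 1) α < binUp (k + 1) (α + 1) := by
  induction k generalizing α with
  | zero =>
    rw [binUp_one, binUp_one]
    exact choose_lt_choose_succ_left (by omega)
  | succ k ih =>
    have h₁ := choose_lead_le α (k + 1)
    have h₂ := lt_choose_lead_succ α (k + 1)
    set m := lead α (k + 2)
    rcases (show α + 1 ≤ (m + 1).choose (k + 2) from h₂).lt_or_eq with hlt | heq
    · rw [binUp_succ_of_choose_le_of_lt h₁ h₂,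
        binUp_succ_of_choose_le_of_lt (by omega) hlt, Nat.sub_add_comm h₁]
      exact Nat.add_lt_add_left (ih _) _
    · rw [heq, binUp_choose_succ]
      exact binUp_lt_choose_succ_succ h₂

end BinUp

theorem binUp_strictMono_general (α β i : ℕ) (hi : 0 < i)
    (hαβ : α < β) : binUp i α < binUp i β := by
  obtain ⟨k, rfl⟩ := Nat.exists_eq_succ_of_ne_zero hi.ne'
  exact strictMono_nat_of_lt_succ (binUp_lt_binUp_succ k) hαβ

/-- Prop. 2.11 a: if `0 < α < β` then `α^{<i>} < β^{<i>}`. -/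
theorem binUp_strictMono (α β i : ℕ) (hα : 0 < α) (hβ : 0 < β) (hi : 0 < i)
    (hαβ : α < β) : binUp i α < binUp i β :=
  binUp_strictMono_general α β i hi hαβ
end

section
/- Let h be a Macaulay function. If there exists n > 1 with h(n) < n + 1, then h is non-increasing from n on, i.e. h(m+1) ≤ h(m) for all m ≥ n. -/
/-! For `α ≤ i` the `i`-binomial development of `α` is
`C(i, i) + C(i-1, i-1) + ⋯ + C(i-α+1, i-α+1)`, so `α^{<i>} = α`. Hence once `h(m) ≤ m`,
the Macaulay bound reads `h(m+1) ≤ h(m) ≤ m < m + 1`, and both inequalities propagate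
from `n` to every `m ≥ n`. -/

open scoped BigOperators

lemma lead_eq_of_pos_of_le {α i : ℕ} (hα : 0 < α) (hαi : α ≤ i) : lead α i = i := by
  have hset : {m : ℕ | Nat.choose m i ≤ α} = Set.Iic i := by
    ext m
    simp only [Set.mem_ofPred_eq, Set.mem_Iic]
    constructor
    · intro hm
      by_contra! him
      have : i + 1 ≤ Nat.choose m i :=
        (Nat.choose_succ_self_right i).symm.le.trans (Nat.choose_le_choose i him)
      omega
    · intro hmi
      rcases hmi.lt_or_eq with hlt | rfl
      · rw [Nat.choose_eq_zero_of_lt hlt]; omega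
      · rwa [Nat.choose_self]
  rw [lead, hset, csSup_Iic]

lemma binUp_eq_self_of_le {i α : ℕ} (hαi : α ≤ i) : binUp i α = α := by
  induction i generalizing α with
  | zero => rw [Nat.le_zero.mp hαi, binUp]
  | succ i ih =>
    rcases Nat.eq_zero_or_pos α with rfl | hα
    · simp [binUp]
    · rw [binUp, if_neg hα.ne', lead_eq_of_pos_of_le hα hαi, Nat.choose_self,
        Nat.choose_self, ih (by omega)]
      omega

namespace MacaulayFun

variable {h : ℕ → ℕ}

lemma succ_le_of_le_self (hM : MacaulayFun h) {i : ℕ} (hi : 1 ≤ i) (hhi : h i ≤ i) :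
    h (i + 1) ≤ h i :=
  binUp_eq_self_of_le hhi ▸ hM.2 i hi

lemma le_self_of_le (hM : MacaulayFun h) {n : ℕ} (hn : 1 ≤ n) (hhn : h n ≤ n) {m : ℕ}
    (hnm : n ≤ m) : h m ≤ m := by
  induction m, hnm using Nat.le_induction with
  | base => exact hhn
  | succ m hnm ih => exact (hM.succ_le_of_le_self (hn.trans hnm) ih).trans (ih.trans m.le_succ)

end MacaulayFun

/-- Prop. 2.11 e: if `h(n) < n + 1` at some `n > 1`, then the
Macaulay function `h` is non-increasing from `n` on. -/
theorem macaulay_antitone_of_lt (h : ℕ → ℕ) (hM : MacaulayFun h)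
    (n : ℕ) (hn : 1 < n) (hlt : h n < n + 1) :
    ∀ m, n ≤ m → h (m + 1) ≤ h m := by
  intro m hnm
  exact hM.succ_le_of_le_self (hn.le.trans hnm)
    (hM.le_self_of_le hn.le (Nat.lt_succ_iff.mp hlt) hnm)
end

section
/- Let h be a finitely supported Macaulay function of type 3 (i.e. h(0) = 1 and h(1) = 3), extended by 0 to negative integers, and let γ = -∂h, i.e. γ(n) = h(n-1) - h(n). Then there exist an integer r ≥ 1 and positive characters γ_0, …, γ_r such that sup γ_i < s_0(γ_{i-1}) for 1 ≤ i ≤ r and γ = γ_0 + γ_1[-1] + ⋯ + γ_r[-r]; moreover r + 1 = s_0(h). -/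
open scoped BigOperators

/-!
Since `h 1 = 3`, Macaulay's bound gives `h n ≤ C(n + 2, 2)`, the number of degree-`n`
monomials in three variables. Arrange these in a triangle with rows of lengths
`n + 1, n, …, 1` and fill `h n` of them in row by row: `rows n (h n)` full rows and
`rem n (h n)` left over. The binomial development of `α < C(n + 2, 2)` gives
`α^{<n>} = α + rows n α`, so from `s₀(h)` on the pair `(rows, rem)` is lexicographically
nonincreasing in `n`. Hence row `i`, read from
degree `i` on, has length `m + 1` (it is full) up to some degree and is nonincreasing
afterwards, so its negative derivative `γᵢ` is a positive character; row `i` is empty once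
row `i - 1` has stopped being full, which gives `sup γᵢ < s₀(γ_{i-1})`. Summing the rows
recovers `h`, and rows `i ≥ s₀(h)` are empty.
-/

namespace MacaulayTypeThree

open Finset

def triSum (n d : ℕ) : ℕ := ∑ k ∈ range d, (n + 1 - k)

lemma triSum_zero (n : ℕ) : triSum n 0 = 0 := rfl

lemma triSum_succ (n d : ℕ) : triSum n (d + 1) = triSum n d + (n + 1 - d) :=
  sum_range_succ _ _

lemma triSum_mono (n : ℕ) : Monotone (triSum n) := fun _ _ hd =>
  sum_le_sum_of_subset (range_subset_range.2 hd)

lemma triSum_succ_succ (n d : ℕ) : triSum (n + 1) (d + 1) = triSum n d + (n + 2) := by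
  rw [triSum, sum_range_succ', triSum]
  simp only [Nat.add_sub_add_right, Nat.sub_zero]

lemma triSum_succ_left {n d : ℕ} (hd : d ≤ n + 1) : triSum (n + 1) d = triSum n d + d := by
  induction d with
  | zero => rfl
  | succ d ih => rw [triSum_succ, triSum_succ, ih (by omega)]; omega

lemma triSum_self_succ (n : ℕ) : triSum n (n + 1) = (n + 2).choose 2 := by
  induction n with
  | zero => rfl
  | succ n ih =>
    rw [triSum_succ_succ, ih, Nat.choose_succ_succ' (n + 2), Nat.choose_one_right, Nat.add_comm]

lemma triSum_add_lt_choose {n d e : ℕ} (hd : d ≤ n) (he : e + d ≤ n) :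
    triSum n d + e < (n + 2).choose 2 := by
  have := triSum_mono n (show d + 1 ≤ n + 1 by omega)
  rw [triSum_succ, triSum_self_succ] at this
  omega

lemma binUp_zero (i : ℕ) : binUp i 0 = 0 := by
  cases i <;> simp [binUp]

lemma lead_eq_of_choose_le_of_lt {a i m : ℕ} (hle : m.choose i ≤ a) (hlt : a < (m + 1).choose i) :
    lead a i = m :=
  IsGreatest.csSup_eq ⟨hle, fun x hx => by
    by_contra! hmx
    exact absurd (hx.trans_lt hlt) (not_lt.2 (Nat.choose_le_choose i hmx))⟩

lemma binUp_succ_choose_add {i m β : ℕ} (hβ : β < m.choose i) :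
    binUp (i + 1) (m.choose (i + 1) + β) = (m + 1).choose (i + 2) + binUp i β := by
  by_cases hα : m.choose (i + 1) + β = 0
  · have hm : m < i + 1 := Nat.choose_eq_zero_iff.1 (by omega)
    rw [hα, Nat.choose_eq_zero_of_lt (by omega : m + 1 < i + 2), show β = 0 by omega,
      binUp_zero, binUp_zero]
  · have hlead : lead (m.choose (i + 1) + β) (i + 1) = m :=
      lead_eq_of_choose_le_of_lt (by omega) (by rw [Nat.choose_succ_succ']; omega)
    rw [binUp, if_neg hα, hlead, Nat.add_sub_cancel_left]

-- `triSum n A + e` is a binomial development as it stands: `A` terms `C(n + 1 - k, n - k)`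
-- followed by `e` terms `C(k, k)`; `<n>` raises each of the former by one and fixes the latter.
lemma binUp_triSum_add {n A e : ℕ} (hA : A ≤ n) (he : e + A ≤ n) :
    binUp n (triSum n A + e) = triSum n A + e + A := by
  induction n generalizing A e with
  | zero =>
    obtain rfl : A = 0 := by omega
    obtain rfl : e = 0 := by omega
    rfl
  | succ n ih =>
    rcases A with _ | B
    · rcases e with _ | e
      · simp [triSum_zero, binUp_zero]
      · have h := binUp_succ_choose_add (i := n) (m := n + 1) (β := e)
          (by rw [Nat.choose_succ_self_right]; omega)
        rw [Nat.choose_self, Nat.choose_self] at h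
        have ih0 := ih (A := 0) (e := e) (by omega) (by omega)
        simp only [triSum_zero, Nat.zero_add, Nat.add_zero] at ih0 h ⊢
        rw [Nat.add_comm 1 e] at h
        omega
    · have hβ : triSum n B + e < (n + 2).choose n := by
        rw [Nat.choose_symm_add (a := n) (b := 2)]
        exact triSum_add_lt_choose (by omega) (by omega)
      have h := binUp_succ_choose_add hβ
      rw [Nat.choose_succ_self_right, Nat.choose_succ_self_right, ih (by omega) (by omega)] at h
      rw [triSum_succ_succ, show triSum n B + (n + 2) + e = n + 2 + (triSum n B + e) by ring, h]
      ring

lemma binUp_choose_two {n : ℕ} (hn : 1 ≤ n) : binUp n ((n + 2).choose 2) = (n + 3).choose 2 := by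
  obtain ⟨i, rfl⟩ : ∃ i, n = i + 1 := ⟨n - 1, by omega⟩
  have h := binUp_succ_choose_add (i := i) (m := i + 3) (β := 0) (Nat.choose_pos (by omega))
  simp only [Nat.add_zero, binUp_zero] at h
  show binUp (i + 1) ((i + 3).choose 2) = (i + 4).choose 2
  rw [← Nat.choose_symm_of_eq_add (by omega : i + 3 = (i + 1) + 2), h,
    Nat.choose_symm_of_eq_add (by omega : i + 3 + 1 = (i + 2) + 2)]

def rows (n a : ℕ) : ℕ := Nat.findGreatest (fun d => triSum n d ≤ a) (n + 1)

def rem (n a : ℕ) : ℕ := a - triSum n (rows n a)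

lemma triSum_rows_le (n a : ℕ) : triSum n (rows n a) ≤ a :=
  Nat.findGreatest_spec (P := fun d => triSum n d ≤ a) (Nat.zero_le _) (Nat.zero_le a)

lemma rows_le_succ (n a : ℕ) : rows n a ≤ n + 1 := Nat.findGreatest_le _

lemma triSum_rows_add_rem (n a : ℕ) : triSum n (rows n a) + rem n a = a := by
  have := triSum_rows_le n a
  rw [rem]
  omega

lemma lt_triSum_rows_succ {n a : ℕ} (h : rows n a ≤ n) : a < triSum n (rows n a + 1) :=
  not_le.1 (Nat.findGreatest_is_greatest (P := fun d => triSum n d ≤ a)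
    (Nat.lt_succ_self _) (by omega))

lemma rows_eq_of_choose_le {n a : ℕ} (h : (n + 2).choose 2 ≤ a) : rows n a = n + 1 :=
  le_antisymm (rows_le_succ n a) (Nat.le_findGreatest le_rfl (by rwa [triSum_self_succ]))

lemma rows_le_of_lt_choose {n a : ℕ} (h : a < (n + 2).choose 2) : rows n a ≤ n := by
  have hle := triSum_rows_le n a
  by_contra! hgt
  rw [show rows n a = n + 1 by have := rows_le_succ n a; omega, triSum_self_succ] at hle
  omega

lemma rem_add_rows_le {n a : ℕ} (h : a < (n + 2).choose 2) : rem n a + rows n a ≤ n := by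
  have hR := rows_le_of_lt_choose h
  have hlt := lt_triSum_rows_succ hR
  have := triSum_rows_add_rem n a
  rw [triSum_succ] at hlt
  omega

lemma rows_zero_right (n : ℕ) : rows n 0 = 0 :=
  Nat.findGreatest_eq_zero_iff.2 fun d hd _ h => by
    have := triSum_mono n (show 1 ≤ d by omega)
    simp only [triSum_succ, triSum_zero] at this
    omega

lemma binUp_eq_add_rows {n a : ℕ} (ha : a < (n + 2).choose 2) : binUp n a = a + rows n a := by
  have h := binUp_triSum_add (rows_le_of_lt_choose ha) (rem_add_rows_le ha)
  rwa [triSum_rows_add_rem] at h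

lemma rows_succ_lex {n a b : ℕ} (ha : a < (n + 2).choose 2) (hb : b ≤ a + rows n a) :
    b < (n + 3).choose 2 ∧ rows (n + 1) b ≤ rows n a ∧
      (rows (n + 1) b = rows n a → rem (n + 1) b ≤ rem n a) := by
  have hR := rows_le_of_lt_choose ha
  have hE := rem_add_rows_le ha
  have ha' := triSum_rows_add_rem n a
  have hb' := triSum_rows_add_rem (n + 1) b
  have hlt : b < triSum (n + 1) (rows n a + 1) := by rw [triSum_succ_succ]; omega
  refine ⟨?_, ?_, fun heq => ?_⟩
  · have := triSum_mono (n + 1) (show rows n a + 1 ≤ n + 2 by omega)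
    rw [triSum_self_succ (n + 1), show n + 1 + 2 = n + 3 from rfl] at this
    omega
  · by_contra! hgt
    have := triSum_mono (n + 1) (show rows n a + 1 ≤ rows (n + 1) b from hgt)
    have := triSum_rows_le (n + 1) b
    omega
  · rw [heq, triSum_succ_left (by omega)] at hb'
    omega

lemma rem_choose_two (n : ℕ) : rem n ((n + 2).choose 2) = 0 := by
  rw [rem, rows_eq_of_choose_le le_rfl, triSum_self_succ, Nat.sub_self]

def rowLen (n a i : ℕ) : ℕ :=
  if i < rows n a then n + 1 - i else if i = rows n a then rem n a else 0

lemma sum_range_rowLen {n a K : ℕ} (hK : rows n a < K) : ∑ i ∈ range K, rowLen n a i = a := by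
  induction K, hK using Nat.le_induction with
  | base =>
    rw [sum_range_succ, rowLen, if_neg (lt_irrefl _), if_pos rfl]
    conv_rhs => rw [← triSum_rows_add_rem n a]
    exact congrArg (· + rem n a) (sum_congr rfl fun i hi => if_pos (mem_range.1 hi))
  | succ K hK ih => rw [sum_range_succ, ih, rowLen, if_neg (by omega), if_neg (by omega)]; rfl

lemma rowLen_of_rows_le {n a i : ℕ} (h : rows n a ≤ i) :
    rowLen n a i = if i = rows n a then rem n a else 0 := by
  rw [rowLen, if_neg (not_lt.2 h)]

lemma rowLen_eq_zero_of_lt {n a i : ℕ} (ha : a ≤ (n + 2).choose 2) (hi : n < i) :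
    rowLen n a i = 0 := by
  have := rows_le_succ n a
  rw [rowLen, if_neg (by omega)]
  split_ifs with h
  · rw [rem, ← h, show i = n + 1 by omega, triSum_self_succ]
    omega
  · rfl

lemma rowLen_zero_middle (n i : ℕ) : rowLen n 0 i = 0 := by
  simp [rowLen, rem, rows_zero_right]

def extendZ (f : ℕ → ℕ) (z : ℤ) : ℤ := if z < 0 then 0 else (f z.toNat : ℤ)

def negDiff (f : ℤ → ℤ) (z : ℤ) : ℤ := f (z - 1) - f z

lemma negDiff_sum_shift {ι : Type*} (s : Finset ι) (c : ι → ℤ) (f : ι → ℤ → ℤ) (z : ℤ) :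
    negDiff (fun w => ∑ i ∈ s, f i (w - c i)) z = ∑ i ∈ s, negDiff (f i) (z - c i) := by
  simp only [negDiff, ← sum_sub_distrib, sub_right_comm]

lemma isChar_negDiff {f : ℤ → ℤ} (hf : (Function.support f).Finite) : IsChar (negDiff f) := by
  have hshift : (Function.support fun z => f (z - 1)).Finite :=
    hf.preimage (sub_left_injective.injOn)
  refine ⟨(hshift.union hf).subset (Function.support_sub _ _), ?_⟩
  simp only [negDiff]
  rw [finsum_sub_distrib hshift hf, ← sub_self (∑ᶠ z, f z)]
  exact congrArg (· - _) (finsum_comp_equiv (Equiv.subRight (1 : ℤ)))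

lemma support_extendZ_finite {f : ℕ → ℕ} (hf : (Function.support f).Finite) :
    (Function.support (extendZ f)).Finite := by
  refine (hf.image (Nat.cast : ℕ → ℤ)).subset fun z hz => ?_
  rw [Function.mem_support, extendZ] at hz
  split_ifs at hz with hneg
  · exact absurd rfl hz
  · exact ⟨z.toNat, by simpa using hz, by omega⟩

lemma negDiff_extendZ_of_neg (f : ℕ → ℕ) {z : ℤ} (hz : z < 0) : negDiff (extendZ f) z = 0 := by
  simp [negDiff, extendZ, hz, show z - 1 < 0 by omega]

lemma negDiff_extendZ_zero (f : ℕ → ℕ) : negDiff (extendZ f) 0 = -f 0 := by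
  simp [negDiff, extendZ]

lemma negDiff_extendZ_succ (f : ℕ → ℕ) (m : ℕ) :
    negDiff (extendZ f) (m + 1) = f m - f (m + 1) := by
  simp [negDiff, extendZ, show ¬ ((m : ℤ) + 1 < 0) by omega]

lemma s0C_eq {γ : ℤ → ℤ} {s : ℤ} (hs : 0 ≤ s) (hlt : ∀ z, 0 ≤ z → z < s → γ z = -1)
    (hγs : γ s ≠ -1) : s0C γ = s :=
  IsLeast.csInf_eq ⟨⟨hs, hγs⟩, fun z ⟨hz0, hz⟩ => by
    by_contra! hzs
    exact hz (hlt z hz0 hzs)⟩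

lemma supZ_lt {γ : ℤ → ℤ} {a t : ℤ} (ha : γ a ≠ 0) (hvan : ∀ z, t ≤ z → γ z = 0) :
    supZ γ < t := by
  have : supZ γ ≤ t - 1 := csSup_le ⟨a, ha⟩ fun z hz => by
    by_contra! hzt
    exact hz (hvan z (by omega))
  omega

section LayerCharacter

variable {g : ℕ → ℕ} {s : ℕ}

lemma s0C_negDiff_extendZ (hs : 1 ≤ s) (hlt : ∀ m < s, g m = m + 1) (hle : g s ≤ s) :
    s0C (negDiff (extendZ g)) = s := by
  refine s0C_eq (by omega) (fun z hz0 hzs => ?_) ?_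
  · lift z to ℕ using hz0
    rcases z with _ | m
    · rw [Nat.cast_zero, negDiff_extendZ_zero, hlt 0 hs]
      rfl
    · rw [Nat.cast_succ, negDiff_extendZ_succ, hlt m (by omega), hlt (m + 1) (by omega)]
      push_cast
      ring
  · obtain ⟨m, rfl⟩ : ∃ m, s = m + 1 := ⟨s - 1, by omega⟩
    rw [Nat.cast_succ, negDiff_extendZ_succ, hlt m (by omega)]
    omega

lemma posChar_negDiff_extendZ (hg : (Function.support g).Finite) (hs : 1 ≤ s)
    (hlt : ∀ m < s, g m = m + 1) (hle : g s ≤ s) (hanti : ∀ m, s ≤ m → g (m + 1) ≤ g m) :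
    PosChar (negDiff (extendZ g)) := by
  refine ⟨isChar_negDiff (support_extendZ_finite hg), fun z hz => negDiff_extendZ_of_neg g hz,
    by rw [negDiff_extendZ_zero, hlt 0 hs]; rfl, fun z hz => ?_⟩
  rw [s0C_negDiff_extendZ hs hlt hle] at hz
  obtain ⟨m, rfl⟩ : ∃ m : ℕ, z = m + 1 := ⟨(z - 1).toNat, by omega⟩
  rw [negDiff_extendZ_succ]
  rcases (show s ≤ m ∨ m + 1 = s by omega) with hm | rfl
  · have := hanti m hm
    omega
  · rw [hlt m (by omega)]
    omega

lemma supZ_negDiff_extendZ_lt (h0 : g 0 ≠ 0) {t : ℕ} (hvan : ∀ m, t ≤ m + 1 → g m = 0) :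
    supZ (negDiff (extendZ g)) < t := by
  refine supZ_lt (a := 0) (by rw [negDiff_extendZ_zero]; omega) fun z hz => ?_
  lift z to ℕ using (by omega)
  rcases z with _ | m
  · exact absurd (hvan 0 (by omega)) h0
  · rw [Nat.cast_succ, negDiff_extendZ_succ, hvan m (by omega), hvan (m + 1) (by omega)]
    rfl

end LayerCharacter

section Macaulay

variable {h : ℕ → ℕ}

lemma exists_forall_le_eq_zero (hfin : (Function.support h).Finite) :
    ∃ N, ∀ n, N ≤ n → h n = 0 := by
  obtain ⟨N, hN⟩ := hfin.bddAbove
  refine ⟨N + 1, fun n hn => ?_⟩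
  by_contra hne
  have := hN (Function.mem_support.2 hne)
  omega

lemma le_choose_two (hM : MacaulayFun h) (h1 : h 1 = 3) (n : ℕ) : h n ≤ (n + 2).choose 2 := by
  induction n with
  | zero => rw [hM.1]; rfl
  | succ n ih =>
    rcases Nat.eq_zero_or_pos n with rfl | hn
    · rw [h1]; rfl
    · have hstep := hM.2 n hn
      rcases ih.lt_or_eq with hlt | heq
      · rw [binUp_eq_add_rows hlt] at hstep
        exact (rows_succ_lex hlt hstep).1.le
      · rwa [heq, binUp_choose_two hn] at hstep

lemma macaulay_rows_succ_lex (hM : MacaulayFun h) {n : ℕ} (hn : 1 ≤ n)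
    (ha : h n < (n + 2).choose 2) :
    h (n + 1) < (n + 3).choose 2 ∧ rows (n + 1) (h (n + 1)) ≤ rows n (h n) ∧
      (rows (n + 1) (h (n + 1)) = rows n (h n) → rem (n + 1) (h (n + 1)) ≤ rem n (h n)) :=
  rows_succ_lex ha (binUp_eq_add_rows ha ▸ hM.2 n hn)

noncomputable def s0Nat (h : ℕ → ℕ) : ℕ := sInf {n | h n < (n + 2).choose 2}

lemma s0Nat_mem (hfin : (Function.support h).Finite) :
    h (s0Nat h) < (s0Nat h + 2).choose 2 := by
  obtain ⟨N, hN⟩ := exists_forall_le_eq_zero hfin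
  refine Nat.sInf_mem (s := {n | h n < (n + 2).choose 2}) ⟨N, ?_⟩
  show h N < (N + 2).choose 2
  rw [hN N le_rfl]
  exact Nat.choose_pos (by omega)

lemma eq_choose_two_of_lt_s0Nat (hM : MacaulayFun h) (h1 : h 1 = 3) {n : ℕ}
    (hn : n < s0Nat h) : h n = (n + 2).choose 2 :=
  le_antisymm (le_choose_two hM h1 n)
    (not_lt.1 (Nat.notMem_of_lt_sInf (s := {n | h n < (n + 2).choose 2}) hn))

lemma two_le_s0Nat (hM : MacaulayFun h) (h1 : h 1 = 3) (hfin : (Function.support h).Finite) :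
    2 ≤ s0Nat h := by
  have hmem := s0Nat_mem hfin
  by_contra! hlt
  interval_cases s0Nat h
  · rw [hM.1] at hmem; exact absurd hmem (by decide)
  · rw [h1] at hmem; exact absurd hmem (by decide)

lemma s0M_eq_s0Nat (h1 : h 1 = 3) (hfin : (Function.support h).Finite) :
    s0M h = s0Nat h := by
  have hchoose (n : ℕ) : (h 1 + n - 1).choose n = (n + 2).choose 2 := by
    rw [h1, show 3 + n - 1 = n + 2 by omega, Nat.choose_symm_add]
  refine IsLeast.csInf_eq ⟨⟨s0Nat h, rfl, by rw [hchoose]; exact s0Nat_mem hfin⟩, ?_⟩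
  rintro _ ⟨n, rfl, hn⟩
  rw [hchoose] at hn
  exact_mod_cast Nat.sInf_le (s := {n | h n < (n + 2).choose 2}) hn

lemma lt_choose_two_of_s0Nat_le (hM : MacaulayFun h) (h1 : h 1 = 3)
    (hfin : (Function.support h).Finite) {n : ℕ} (hn : s0Nat h ≤ n) :
    h n < (n + 2).choose 2 := by
  induction n, hn using Nat.le_induction with
  | base => exact s0Nat_mem hfin
  | succ n hn ih =>
    have := two_le_s0Nat hM h1 hfin
    exact (macaulay_rows_succ_lex hM (by omega) ih).1

lemma rows_lex_antitone (hM : MacaulayFun h) (h1 : h 1 = 3) (hfin : (Function.support h).Finite)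
    {n n' : ℕ} (hn : s0Nat h ≤ n) (hnn' : n ≤ n') :
    rows n' (h n') ≤ rows n (h n) ∧
      (rows n' (h n') = rows n (h n) → rem n' (h n') ≤ rem n (h n)) := by
  induction n', hnn' using Nat.le_induction with
  | base => exact ⟨le_rfl, fun _ => le_rfl⟩
  | succ n' hnn' ih =>
    have := two_le_s0Nat hM h1 hfin
    obtain ⟨-, hR, hE⟩ :=
      macaulay_rows_succ_lex hM (by omega) (lt_choose_two_of_s0Nat_le hM h1 hfin (hn.trans hnn'))
    refine ⟨hR.trans ih.1, fun heq => (hE (le_antisymm hR (heq ▸ ih.1))).trans (ih.2 ?_)⟩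
    have := ih.1
    omega

lemma rows_eq_of_lt_s0Nat (hM : MacaulayFun h) (h1 : h 1 = 3) {n : ℕ} (hn : n < s0Nat h) :
    rows n (h n) = n + 1 :=
  rows_eq_of_choose_le (eq_choose_two_of_lt_s0Nat hM h1 hn).ge

lemma s0Nat_le_of_rows_le (hM : MacaulayFun h) (h1 : h 1 = 3) {n : ℕ}
    (hR : rows n (h n) ≤ n) : s0Nat h ≤ n := by
  by_contra! hn
  rw [rows_eq_of_lt_s0Nat hM h1 hn] at hR
  omega

lemma rows_le_s0Nat (hM : MacaulayFun h) (h1 : h 1 = 3) (hfin : (Function.support h).Finite)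
    (n : ℕ) : rows n (h n) ≤ s0Nat h := by
  rcases lt_or_ge n (s0Nat h) with hn | hn
  · rw [rows_eq_of_lt_s0Nat hM h1 hn]
    omega
  · exact (rows_lex_antitone hM h1 hfin le_rfl hn).1.trans
      (rows_le_of_lt_choose (s0Nat_mem hfin))

lemma rowLen_s0Nat_eq_zero (hM : MacaulayFun h) (h1 : h 1 = 3)
    (hfin : (Function.support h).Finite) (n : ℕ) : rowLen n (h n) (s0Nat h) = 0 := by
  rw [rowLen_of_rows_le (rows_le_s0Nat hM h1 hfin n)]
  split_ifs with hR
  · rcases lt_or_ge n (s0Nat h) with hn | hn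
    · rw [eq_choose_two_of_lt_s0Nat hM h1 hn, rem_choose_two]
    · obtain ⟨hRs, hEs⟩ := rows_lex_antitone hM h1 hfin le_rfl hn
      have := rem_add_rows_le (s0Nat_mem hfin)
      have := rows_le_of_lt_choose (s0Nat_mem hfin)
      have := hEs (by omega)
      omega
  · rfl

lemma sum_range_s0Nat_rowLen (hM : MacaulayFun h) (h1 : h 1 = 3)
    (hfin : (Function.support h).Finite) (n : ℕ) :
    ∑ i ∈ range (s0Nat h), rowLen n (h n) i = h n := by
  have hsum := sum_range_rowLen (n := n) (a := h n)
    (Nat.lt_succ_of_le (rows_le_s0Nat hM h1 hfin n))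
  rwa [sum_range_succ, rowLen_s0Nat_eq_zero hM h1 hfin, add_zero] at hsum

noncomputable def layerStart (h : ℕ → ℕ) (i : ℕ) : ℕ :=
  sInf {m | rows (m + i) (h (m + i)) ≤ i}

lemma layerStart_le_of_rows_le {i m : ℕ} (hm : rows (m + i) (h (m + i)) ≤ i) :
    layerStart h i ≤ m :=
  Nat.sInf_le (s := {m | rows (m + i) (h (m + i)) ≤ i}) hm

lemma rows_layerStart_le (hfin : (Function.support h).Finite) (i : ℕ) :
    rows (layerStart h i + i) (h (layerStart h i + i)) ≤ i := by
  obtain ⟨N, hN⟩ := exists_forall_le_eq_zero hfin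
  refine Nat.sInf_mem (s := {m | rows (m + i) (h (m + i)) ≤ i}) ⟨N, ?_⟩
  show rows (N + i) (h (N + i)) ≤ i
  rw [hN (N + i) (by omega), rows_zero_right]
  omega

lemma rows_le_of_layerStart_le (hM : MacaulayFun h) (h1 : h 1 = 3)
    (hfin : (Function.support h).Finite) {i m : ℕ} (hm : layerStart h i ≤ m) :
    rows (m + i) (h (m + i)) ≤ i := by
  have h0 := rows_layerStart_le hfin i
  have hs := s0Nat_le_of_rows_le hM h1 (h0.trans (by omega))
  exact (rows_lex_antitone hM h1 hfin hs (by omega)).1.trans h0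

/-- Row `i` of the triangles of `h`, read from degree `i` on: `layer h i m` is its length
in degree `m + i`. -/
def layer (h : ℕ → ℕ) (i m : ℕ) : ℕ := rowLen (m + i) (h (m + i)) i

lemma layer_of_lt_layerStart {i m : ℕ} (hm : m < layerStart h i) : layer h i m = m + 1 := by
  have hR : i < rows (m + i) (h (m + i)) := by
    by_contra! hR
    exact absurd (layerStart_le_of_rows_le hR) (not_le.2 hm)
  rw [layer, rowLen, if_pos hR]
  omega

lemma layer_layerStart_le (hM : MacaulayFun h) (h1 : h 1 = 3)
    (hfin : (Function.support h).Finite) (i : ℕ) :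
    layer h i (layerStart h i) ≤ layerStart h i := by
  have hR := rows_layerStart_le hfin i
  have hs := s0Nat_le_of_rows_le hM h1 (hR.trans (by omega))
  have hE := rem_add_rows_le (lt_choose_two_of_s0Nat_le hM h1 hfin hs)
  rw [layer, rowLen_of_rows_le hR]
  split_ifs <;> omega

lemma layer_succ_le (hM : MacaulayFun h) (h1 : h 1 = 3) (hfin : (Function.support h).Finite)
    {i m : ℕ} (hm : layerStart h i ≤ m) : layer h i (m + 1) ≤ layer h i m := by
  have hR := rows_le_of_layerStart_le hM h1 hfin hm
  have hs := s0Nat_le_of_rows_le hM h1 (hR.trans (by omega))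
  obtain ⟨hR', hE'⟩ := rows_lex_antitone hM h1 hfin hs (Nat.le_succ (m + i))
  rw [layer, layer, show m + 1 + i = m + i + 1 by ring, rowLen_of_rows_le hR,
    rowLen_of_rows_le (hR'.trans hR)]
  split_ifs
  · exact hE' (by omega)
  all_goals omega

lemma layer_eq_zero_of_layerStart_pred_le (hM : MacaulayFun h) (h1 : h 1 = 3)
    (hfin : (Function.support h).Finite) {i m : ℕ} (hi : 1 ≤ i)
    (hm : layerStart h (i - 1) ≤ m + 1) : layer h i m = 0 := by
  have hR := rows_le_of_layerStart_le hM h1 hfin hm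
  rw [show m + 1 + (i - 1) = m + i by omega] at hR
  rw [layer, rowLen_of_rows_le (by omega), if_neg (by omega)]

lemma one_le_layerStart (hM : MacaulayFun h) (h1 : h 1 = 3)
    (hfin : (Function.support h).Finite) {i : ℕ} (hi : i < s0Nat h) : 1 ≤ layerStart h i := by
  by_contra! h0
  have hR := rows_le_of_layerStart_le hM h1 hfin (i := i) (m := 0) (by omega)
  rw [Nat.zero_add, rows_eq_of_lt_s0Nat hM h1 hi] at hR
  omega

lemma layer_support_finite (hfin : (Function.support h).Finite) (i : ℕ) :
    (Function.support (layer h i)).Finite := by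
  obtain ⟨N, hN⟩ := exists_forall_le_eq_zero hfin
  refine (Set.finite_Iio N).subset fun m hm => ?_
  by_contra hmN
  rw [Set.mem_Iio, not_lt] at hmN
  exact hm (by rw [layer, hN (m + i) (by omega), rowLen_zero_middle])

lemma extendZ_layer_natCast_sub (hM : MacaulayFun h) (h1 : h 1 = 3) (n i : ℕ) :
    extendZ (layer h i) ((n : ℤ) - i) = rowLen n (h n) i := by
  rcases le_or_gt i n with hin | hni
  · rw [extendZ, if_neg (by omega), show ((n : ℤ) - i).toNat = n - i by omega, layer,
      Nat.sub_add_cancel hin]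
  · rw [extendZ, if_pos (by omega), rowLen_eq_zero_of_lt (le_choose_two hM h1 n) hni]
    rfl

lemma extendZ_eq_sum_layer (hM : MacaulayFun h) (h1 : h 1 = 3)
    (hfin : (Function.support h).Finite) (z : ℤ) :
    extendZ h z = ∑ i ∈ range (s0Nat h), extendZ (layer h i) (z - i) := by
  rcases lt_or_ge z 0 with hz | hz
  · rw [extendZ, if_pos hz]
    exact (sum_eq_zero fun i _ => by rw [extendZ, if_pos (by omega)]).symm
  · lift z to ℕ using hz
    simp_rw [extendZ_layer_natCast_sub hM h1]
    rw [← Nat.cast_sum, sum_range_s0Nat_rowLen hM h1 hfin, extendZ, if_neg (by omega),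
      Int.toNat_natCast]

/-- The character `γᵢ = -∂(layer i)` of the decomposition. -/
def layerChar (h : ℕ → ℕ) (i : ℕ) : ℤ → ℤ := negDiff (extendZ (layer h i))

lemma negDiff_extendZ_eq_sum_layerChar (hM : MacaulayFun h) (h1 : h 1 = 3)
    (hfin : (Function.support h).Finite) (z : ℤ) :
    negDiff (extendZ h) z = ∑ i ∈ range (s0Nat h), layerChar h i (z - i) := by
  rw [show extendZ h = _ from funext (extendZ_eq_sum_layer hM h1 hfin), negDiff_sum_shift]
  rfl

lemma s0C_layerChar (hM : MacaulayFun h) (h1 : h 1 = 3) (hfin : (Function.support h).Finite)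
    {i : ℕ} (hi : i < s0Nat h) : s0C (layerChar h i) = layerStart h i :=
  s0C_negDiff_extendZ (one_le_layerStart hM h1 hfin hi) (fun _ => layer_of_lt_layerStart)
    (layer_layerStart_le hM h1 hfin i)

lemma posChar_layerChar (hM : MacaulayFun h) (h1 : h 1 = 3)
    (hfin : (Function.support h).Finite) {i : ℕ} (hi : i < s0Nat h) :
    PosChar (layerChar h i) :=
  posChar_negDiff_extendZ (layer_support_finite hfin i) (one_le_layerStart hM h1 hfin hi)
    (fun _ => layer_of_lt_layerStart) (layer_layerStart_le hM h1 hfin i)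
    (fun _ => layer_succ_le hM h1 hfin)

lemma supZ_layerChar_lt (hM : MacaulayFun h) (h1 : h 1 = 3)
    (hfin : (Function.support h).Finite) {i : ℕ} (hi1 : 1 ≤ i) (hi : i < s0Nat h) :
    supZ (layerChar h i) < layerStart h (i - 1) := by
  have hpos := one_le_layerStart hM h1 hfin hi
  exact supZ_negDiff_extendZ_lt (by rw [layer_of_lt_layerStart hpos]; omega)
    fun _ => layer_eq_zero_of_layerStart_pred_le hM h1 hfin hi1

end Macaulay

end MacaulayTypeThree

open MacaulayTypeThree in
/-- Prop. 3.5: for a finitely supported Macaulay function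
`h` of type 3, the character `γ = -∂h` decomposes as
`γ = γ₀ + γ₁[-1] + ⋯ + γ_r[-r]` with positive characters `γᵢ` satisfying
`sup γᵢ < s₀(γ_{i-1})`, and `r + 1 = s₀(h)`. -/
theorem macaulay_type_three_decomposition (h : ℕ → ℕ)
    (hfin : (Function.support h).Finite)
    (hM : MacaulayFun h) (h1 : h 1 = 3)
    (hz : ℤ → ℤ) (hhz : ∀ n : ℤ, hz n = if n < 0 then 0 else (h n.toNat : ℤ))
    (γ : ℤ → ℤ) (hγ : ∀ n : ℤ, γ n = hz (n - 1) - hz n) :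
    ∃ r : ℕ, 1 ≤ r ∧ ∃ Γ : ℕ → ℤ → ℤ,
      (∀ i ≤ r, PosChar (Γ i)) ∧
      (∀ i, 1 ≤ i → i ≤ r → supZ (Γ i) < s0C (Γ (i - 1))) ∧
      (∀ n : ℤ, γ n = ∑ i ∈ Finset.range (r + 1), Γ i (n - i)) ∧
      s0M h = (r : ℕ∞) + 1 := by
  have hs := two_le_s0Nat hM h1 hfin
  obtain rfl : hz = extendZ h := funext hhz
  refine ⟨s0Nat h - 1, by omega, layerChar h,
    fun i hi => posChar_layerChar hM h1 hfin (by omega), fun i hi1 hir => ?_, fun n => ?_, ?_⟩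
  · rw [s0C_layerChar hM h1 hfin (by omega)]
    exact supZ_layerChar_lt hM h1 hfin hi1 (by omega)
  · rw [Nat.sub_add_cancel (by omega), hγ]
    exact negDiff_extendZ_eq_sum_layerChar hM h1 hfin n
  · rw [s0M_eq_s0Nat h1 hfin]
    norm_cast
    omega
end

section
/- Let γ : ℤ → ℤ be a character with γ(n) = 0 for n < 0 and γ(0) = -1. Then the following are equivalent: (i) there exist positive characters γ_0 and γ_1 with sup γ_1 < s_0(γ_0) such that γ = γ_0 + γ_1[-1]; (ii) there exist integers 1 ≤ t < s such that γ(n) = -2 for 1 ≤ n ≤ t, γ(n) ≥ -1 for t < n < s, γ(n) ≥ 0 for n ≥ s, and Σ_{n > s} γ(n) ≤ s ≤ Σ_{n ≥ s} γ(n). Moreover, when these hold one can take t = s_0(γ_1) and s = s_0(γ_0). -/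
open scoped BigOperators

/-! The decomposition is forced. Since `sup γ₁ < s₀(γ₀)`, the shifted `γ₁` vanishes beyond
`s = s₀(γ₀)`, so `γ₀` is `-1` on `[0, s)`, agrees with `γ` beyond `s`, and its value at `s` is
fixed by `∑ γ₀ = 0`; then `γ₁ = (γ - γ₀)[+1]`. For a character that is `-1` on `[0, s)` and `0`
below, `∑ = 0` says exactly `∑_{n ≥ s} = s`, which turns `γ₀(s) ≥ 0` and `γ₁(s - 1) ≥ 0` into the
two sum inequalities. -/

open Set Function

section IntervalSums

variable {α M : Type*} [LinearOrder α] [AddCommMonoid M] {f : α → M}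

lemma finsum_eq_finsum_mem_Iio_add_finsum_mem_Ici (hf : (support f).Finite) (s : α) :
    ∑ᶠ n, f n = ∑ᶠ n ∈ Iio s, f n + ∑ᶠ n ∈ Ici s, f n := by
  rw [← finsum_mem_univ, ← Iio_union_Ici,
    finsum_mem_union' (Iio_disjoint_Ici le_rfl) (hf.inter_of_right _) (hf.inter_of_right _)]

lemma finsum_mem_Ici_eq_add_finsum_mem_Ioi (hf : (support f).Finite) {s : α} :
    ∑ᶠ n ∈ Ici s, f n = f s + ∑ᶠ n ∈ Ioi s, f n := by
  rw [← Ioi_insert, finsum_mem_insert' f self_notMem_Ioi (hf.inter_of_right _)]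

end IntervalSums

lemma finsum_mem_Iio_of_eq_neg_one {γ : ℤ → ℤ} {s : ℤ} (hneg : ∀ n < 0, γ n = 0) (hs : 0 ≤ s)
    (hval : ∀ n, 0 ≤ n → n < s → γ n = -1) : ∑ᶠ n ∈ Iio s, γ n = -s := by
  rw [finsum_mem_eq_sum_of_inter_support_eq γ (t := Finset.Ico 0 s)]
  · rw [Finset.sum_congr rfl fun n hn => hval n (Finset.mem_Ico.1 hn).1 (Finset.mem_Ico.1 hn).2]
    simp [hs]
  · ext n
    simp only [mem_inter_iff, mem_Iio, Finset.coe_Ico, mem_Ico, mem_support]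
    constructor
    · exact fun ⟨hns, hn⟩ => ⟨⟨not_lt.1 fun h => hn (hneg n h), hns⟩, hn⟩
    · exact fun ⟨⟨_, hns⟩, hn⟩ => ⟨hns, hn⟩

lemma IsChar.sub {γ δ : ℤ → ℤ} (hγ : IsChar γ) (hδ : IsChar δ) : IsChar (γ - δ) :=
  ⟨HasFiniteSupport.sub hγ.1 hδ.1, by
    rw [Pi.sub_def, finsum_sub_distrib hγ.1 hδ.1, hγ.2, hδ.2, sub_zero]⟩

lemma IsChar.comp_add_right {γ : ℤ → ℤ} (hγ : IsChar γ) (c : ℤ) :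
    IsChar fun n => γ (n + c) :=
  ⟨HasFiniteSupport.comp_of_injective (add_left_injective c) hγ.1,
   (finsum_comp_equiv (Equiv.addRight c)).trans hγ.2⟩

section s0C

variable {γ : ℤ → ℤ} {n s : ℤ}

lemma apply_eq_neg_one_of_lt_s0C (hn : 0 ≤ n) (hlt : n < s0C γ) : γ n = -1 := by
  by_contra h
  exact (csInf_le ⟨0, fun _ hm => hm.1⟩ ⟨hn, h⟩ : s0C γ ≤ n).not_gt hlt

lemma s0C_mem (hγ : (support γ).Finite) : 0 ≤ s0C γ ∧ γ (s0C γ) ≠ -1 := by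
  obtain ⟨m, hm, hm'⟩ := ((Ici_infinite (0 : ℤ)).sdiff hγ).nonempty
  have hγm : γ m = 0 := notMem_support.1 hm'
  exact Int.csInf_mem (s := {n : ℤ | 0 ≤ n ∧ γ n ≠ -1}) ⟨m, hm, by omega⟩ ⟨0, fun _ hk => hk.1⟩

lemma s0C_eq (hs : 0 ≤ s) (hlt : ∀ n, 0 ≤ n → n < s → γ n = -1) (hne : γ s ≠ -1) :
    s0C γ = s :=
  le_antisymm (csInf_le ⟨0, fun _ hm => hm.1⟩ ⟨hs, hne⟩)
    (le_csInf ⟨s, hs, hne⟩ fun n ⟨hn, hn'⟩ => not_lt.1 fun h => hn' (hlt n hn h))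

end s0C

lemma apply_eq_zero_of_supZ_lt {γ : ℤ → ℤ} {n : ℤ} (hγ : (support γ).Finite) (h : supZ γ < n) :
    γ n = 0 := by
  by_contra h'
  exact h.not_ge (le_csSup hγ.bddAbove h')

lemma supZ_lt_of_forall_le {γ : ℤ → ℤ} {a b : ℤ} (ha : γ a ≠ 0)
    (h : ∀ n, b ≤ n → γ n = 0) : supZ γ < b := by
  have : supZ γ ≤ b - 1 := csSup_le ⟨a, ha⟩ fun n hn => not_lt.1 fun hb => hn (h n (by omega))
  omega

namespace PosChar

variable {γ : ℤ → ℤ}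

lemma one_le_s0C (hγ : PosChar γ) : 1 ≤ s0C γ := by
  obtain ⟨hs, hne⟩ := s0C_mem hγ.1.1
  have : s0C γ ≠ 0 := fun h => hne (h ▸ hγ.2.2.1)
  omega

lemma finsum_mem_Ici_s0C (hγ : PosChar γ) : ∑ᶠ n ∈ Ici (s0C γ), γ n = s0C γ := by
  have h := finsum_eq_finsum_mem_Iio_add_finsum_mem_Ici hγ.1.1 (s0C γ)
  rw [hγ.1.2, finsum_mem_Iio_of_eq_neg_one hγ.2.1 (s0C_mem hγ.1.1).1
    fun _ => apply_eq_neg_one_of_lt_s0C] at h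
  omega

lemma s0C_le_supZ (hγ : PosChar γ) : s0C γ ≤ supZ γ := by
  by_contra! h
  have hzero : ∑ᶠ n ∈ Ici (s0C γ), γ n = 0 := finsum_mem_eq_zero_of_forall_eq_zero
    fun n hn => apply_eq_zero_of_supZ_lt hγ.1.1 (h.trans_le hn)
  have := hγ.one_le_s0C
  rw [hγ.finsum_mem_Ici_s0C] at hzero
  omega

end PosChar

/-- The candidate for `γ₀`: its value at `s` is the one forced by the vanishing of the total
sum. -/
noncomputable def posCharAbove (γ : ℤ → ℤ) (s : ℤ) : ℤ → ℤ := fun n =>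
  if n < 0 then 0 else if n < s then -1 else if n = s then s - ∑ᶠ m ∈ Ioi s, γ m else γ n

section posCharAbove

variable {γ : ℤ → ℤ} {s n : ℤ}

lemma posCharAbove_of_neg (hn : n < 0) : posCharAbove γ s n = 0 := if_pos hn

lemma posCharAbove_of_lt (hn : 0 ≤ n) (hns : n < s) : posCharAbove γ s n = -1 := by
  simp [posCharAbove, hns, not_lt.2 hn]

lemma posCharAbove_self (hs : 0 ≤ s) : posCharAbove γ s s = s - ∑ᶠ m ∈ Ioi s, γ m := by
  simp [posCharAbove, not_lt.2 hs]

lemma posCharAbove_of_gt (hs : 0 ≤ s) (hn : s < n) : posCharAbove γ s n = γ n := by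
  simp only [posCharAbove]
  rw [if_neg (by omega), if_neg (by omega), if_neg (by omega)]

lemma isChar_posCharAbove (hγ : (support γ).Finite) (hs : 0 ≤ s) :
    IsChar (posCharAbove γ s) := by
  have hfin : (support (posCharAbove γ s)).Finite := by
    refine ((finite_Icc 0 s).union hγ).subset fun n hn => ?_
    rcases lt_or_ge n 0 with h | h
    · exact absurd (posCharAbove_of_neg h) hn
    rcases le_or_gt n s with h' | h'
    · exact Or.inl ⟨h, h'⟩
    · exact Or.inr (by rwa [mem_support, ← posCharAbove_of_gt (γ := γ) hs h'])
  have hgt : ∑ᶠ n ∈ Ioi s, posCharAbove γ s n = ∑ᶠ n ∈ Ioi s, γ n :=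
    finsum_mem_congr rfl fun _ => posCharAbove_of_gt hs
  refine ⟨hfin, ?_⟩
  rw [finsum_eq_finsum_mem_Iio_add_finsum_mem_Ici hfin s,
    finsum_mem_Ici_eq_add_finsum_mem_Ioi hfin,
    finsum_mem_Iio_of_eq_neg_one (fun _ => posCharAbove_of_neg) hs
      fun _ => posCharAbove_of_lt,
    posCharAbove_self hs, hgt]
  ring

lemma s0C_posCharAbove (hs : 0 ≤ s) (hS : ∑ᶠ m ∈ Ioi s, γ m ≤ s) :
    s0C (posCharAbove γ s) = s :=
  s0C_eq hs (fun _ => posCharAbove_of_lt) (by rw [posCharAbove_self hs]; omega)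

lemma posChar_posCharAbove (hγ : (support γ).Finite) (hs : 0 < s)
    (hS : ∑ᶠ m ∈ Ioi s, γ m ≤ s) (hpos : ∀ n, s < n → 0 ≤ γ n) :
    PosChar (posCharAbove γ s) := by
  refine ⟨isChar_posCharAbove hγ hs.le, fun _ => posCharAbove_of_neg,
    posCharAbove_of_lt le_rfl hs, ?_⟩
  rw [s0C_posCharAbove hs.le hS]
  intro n hn
  rcases hn.eq_or_lt with rfl | h
  · rw [posCharAbove_self hs.le]
    omega
  · rw [posCharAbove_of_gt hs.le h]
    exact hpos n h

end posCharAbove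

def IsPosDecomposition (γ γ₀ γ₁ : ℤ → ℤ) : Prop :=
  PosChar γ₀ ∧ PosChar γ₁ ∧ supZ γ₁ < s0C γ₀ ∧ ∀ n : ℤ, γ n = γ₀ n + γ₁ (n - 1)

def QuadricConditions (γ : ℤ → ℤ) (t s : ℤ) : Prop :=
  1 ≤ t ∧ t < s ∧ (∀ n : ℤ, 1 ≤ n → n ≤ t → γ n = -2) ∧ (∀ n : ℤ, t < n → n < s → -1 ≤ γ n) ∧
    (∀ n : ℤ, s ≤ n → 0 ≤ γ n) ∧ ∑ᶠ n ∈ Ioi s, γ n ≤ s ∧ s ≤ ∑ᶠ n ∈ Ici s, γ n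

theorem IsPosDecomposition.quadricConditions {γ γ₀ γ₁ : ℤ → ℤ}
    (h : IsPosDecomposition γ γ₀ γ₁) : QuadricConditions γ (s0C γ₁) (s0C γ₀) := by
  obtain ⟨h₀, h₁, hsup, hdec⟩ := h
  set s := s0C γ₀
  set t := s0C γ₁
  have ht := h₁.one_le_s0C
  have hts : t < s := h₁.s0C_le_supZ.trans_lt hsup
  have below₀ : ∀ n, 0 ≤ n → n < s → γ₀ n = -1 := fun _ => apply_eq_neg_one_of_lt_s0C
  have below₁ : ∀ n, 0 ≤ n → n < t → γ₁ n = -1 := fun _ => apply_eq_neg_one_of_lt_s0C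
  have above₀ : ∀ n, s ≤ n → 0 ≤ γ₀ n := h₀.2.2.2
  have above₁ : ∀ n, t ≤ n → 0 ≤ γ₁ n := h₁.2.2.2
  have hfin : (support γ).Finite := by
    rw [show γ = γ₀ + γ₁ ∘ fun n => n - 1 from funext hdec]
    exact HasFiniteSupport.add h₀.1.1
      (HasFiniteSupport.comp_of_injective (sub_left_injective (b := 1)) h₁.1.1)
  have hgt : ∑ᶠ n ∈ Ioi s, γ n = s - γ₀ s := by
    have hγγ₀ : ∑ᶠ n ∈ Ioi s, γ n = ∑ᶠ n ∈ Ioi s, γ₀ n :=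
      finsum_mem_congr rfl fun n (hn : s < n) => by
        rw [hdec, apply_eq_zero_of_supZ_lt h₁.1.1 (by omega), add_zero]
    rw [hγγ₀]
    have hsum₀ : ∑ᶠ n ∈ Ici s, γ₀ n = s := h₀.finsum_mem_Ici_s0C
    rw [finsum_mem_Ici_eq_add_finsum_mem_Ioi h₀.1.1] at hsum₀
    omega
  refine ⟨ht, hts, fun n hn hnt => ?_, fun n htn hns => ?_, fun n hn => ?_, ?_, ?_⟩
  · rw [hdec, below₀ n (by omega) (by omega), below₁ (n - 1) (by omega) (by omega)]
    rfl
  · rw [hdec, below₀ n (by omega) hns]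
    linarith [above₁ (n - 1) (by omega)]
  · rw [hdec]
    linarith [above₀ n hn, above₁ (n - 1) (by omega)]
  · linarith [above₀ s le_rfl]
  · rw [finsum_mem_Ici_eq_add_finsum_mem_Ioi hfin, hgt, hdec]
    linarith [above₁ (s - 1) (by omega)]

theorem QuadricConditions.exists_isPosDecomposition {γ : ℤ → ℤ} {t s : ℤ} (hγ : IsChar γ)
    (hneg : ∀ n < 0, γ n = 0) (h0 : γ 0 = -1) (h : QuadricConditions γ t s) :
    ∃ γ₀ γ₁, IsPosDecomposition γ γ₀ γ₁ := by
  obtain ⟨ht, hts, hneg_two, hge_neg_one, hpos, hgt, hge⟩ := h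
  rw [finsum_mem_Ici_eq_add_finsum_mem_Ioi hγ.1] at hge
  set γ₀ := posCharAbove γ s
  have h₀ : PosChar γ₀ := posChar_posCharAbove hγ.1 (by omega) hgt fun n hn => hpos n hn.le
  set γ₁ : ℤ → ℤ := fun n => γ (n + 1) - γ₀ (n + 1)
  have neg₁ : ∀ n < 0, γ₁ n = 0 := by
    intro n hn
    rcases (show n + 1 < 0 ∨ n + 1 = 0 by omega) with h | h
    · simp only [γ₁, hneg _ h, γ₀, posCharAbove_of_neg h, sub_zero]
    · simp only [γ₁, h, h0, γ₀, posCharAbove_of_lt le_rfl (by omega : (0 : ℤ) < s), sub_self]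
  have below₁ : ∀ n, 0 ≤ n → n < t → γ₁ n = -1 := by
    intro n hn hnt
    simp only [γ₁, γ₀, hneg_two (n + 1) (by omega) (by omega),
      posCharAbove_of_lt (by omega : 0 ≤ n + 1) (by omega : n + 1 < s)]
    rfl
  have vanish₁ : ∀ n, s ≤ n → γ₁ n = 0 := fun n hn => by
    simp only [γ₁, γ₀, posCharAbove_of_gt (by omega : 0 ≤ s) (by omega : s < n + 1), sub_self]
  have above₁ : ∀ n, t ≤ n → 0 ≤ γ₁ n := by
    intro n hn
    rcases (show n + 1 < s ∨ n + 1 = s ∨ s ≤ n by omega) with h | h | h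
    · simp only [γ₁, γ₀, posCharAbove_of_lt (by omega : 0 ≤ n + 1) h]
      linarith [hge_neg_one (n + 1) (by omega) h]
    · simp only [γ₁, γ₀, h, posCharAbove_self (by omega : 0 ≤ s)]
      linarith
    · exact (vanish₁ n h).ge
  have h₁ : PosChar γ₁ := by
    refine ⟨(hγ.sub h₀.1).comp_add_right 1, neg₁, below₁ 0 le_rfl (by omega), ?_⟩
    rw [s0C_eq (by omega) below₁ (by linarith [above₁ t le_rfl])]
    exact above₁
  refine ⟨γ₀, γ₁, h₀, h₁, ?_, fun n => by simp [γ₁]⟩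
  rw [s0C_posCharAbove (by omega) hgt]
  exact supZ_lt_of_forall_le (a := 0) (by rw [below₁ 0 le_rfl (by omega)]; omega) vanish₁

/-- Prop. 3.10: characterization of characters of the form
`γ = γ₀ + γ₁[-1]` with `γ₀, γ₁` positive characters and `sup γ₁ < s₀(γ₀)`;
moreover one can take `t = s₀(γ₁)` and `s = s₀(γ₀)`. -/
theorem char_on_quadric_iff (γ : ℤ → ℤ) (hchar : IsChar γ)
    (hneg : ∀ n < 0, γ n = 0) (h0 : γ 0 = -1) :
    ((∃ γ0 γ1 : ℤ → ℤ, PosChar γ0 ∧ PosChar γ1 ∧ supZ γ1 < s0C γ0 ∧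
        ∀ n : ℤ, γ n = γ0 n + γ1 (n - 1)) ↔
      (∃ t s : ℤ, 1 ≤ t ∧ t < s ∧
        (∀ n : ℤ, 1 ≤ n → n ≤ t → γ n = -2) ∧
        (∀ n : ℤ, t < n → n < s → -1 ≤ γ n) ∧
        (∀ n : ℤ, s ≤ n → 0 ≤ γ n) ∧
        (∑ᶠ n ∈ {m : ℤ | s < m}, γ n) ≤ s ∧
        s ≤ ∑ᶠ n ∈ {m : ℤ | s ≤ m}, γ n)) ∧
    (∀ γ0 γ1 : ℤ → ℤ, PosChar γ0 → PosChar γ1 → supZ γ1 < s0C γ0 →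
      (∀ n : ℤ, γ n = γ0 n + γ1 (n - 1)) →
      (1 ≤ s0C γ1 ∧ s0C γ1 < s0C γ0 ∧
        (∀ n : ℤ, 1 ≤ n → n ≤ s0C γ1 → γ n = -2) ∧
        (∀ n : ℤ, s0C γ1 < n → n < s0C γ0 → -1 ≤ γ n) ∧
        (∀ n : ℤ, s0C γ0 ≤ n → 0 ≤ γ n) ∧
        (∑ᶠ n ∈ {m : ℤ | s0C γ0 < m}, γ n) ≤ s0C γ0 ∧
        s0C γ0 ≤ ∑ᶠ n ∈ {m : ℤ | s0C γ0 ≤ m}, γ n)) := by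
  refine ⟨⟨fun ⟨γ₀, γ₁, hdec⟩ => ⟨_, _, IsPosDecomposition.quadricConditions hdec⟩,
    fun ⟨t, s, hts⟩ => QuadricConditions.exists_isPosDecomposition hchar hneg h0 hts⟩,
    fun γ₀ γ₁ h₀ h₁ hsup hdec => IsPosDecomposition.quadricConditions ⟨h₀, h₁, hsup, hdec⟩⟩
end
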